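/- (Proposition 3.3, second inequality) The new Lagrange basis function satisfies ‖ℓ'_{n+1}‖_{L∞(K)} ≤ |det V / det V'| · ‖φ_{n+1}‖_{L∞(K)} · (1 + Λ). -/

import Mathlib

open MvPolynomial

/-! The last row of `V'⁻¹` is pinned down by the first `n` columns of `V'⁻¹ V' = 1` up to its
last entry, and that entry is a cofactor, `det V / det V'`. Hence
`ℓ'_{n+1} = (det V / det V') (φ_{n+1} - ∑ⱼ φ_{n+1}(xⱼ) ℓⱼ)`: a multiple of the interpolation
error of `φ_{n+1}` on the old nodes, which is at most `‖φ_{n+1}‖ (1 + Λ)` on `K`. -/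

attribute [fun_prop] MvPolynomial.continuous_eval

namespace Matrix

variable {𝕜 : Type*} [Field 𝕜] {n : ℕ}

theorem inv_apply_last_last (A : Matrix (Fin (n + 1)) (Fin (n + 1)) 𝕜) :
    A⁻¹ (Fin.last n) (Fin.last n) = (A.submatrix Fin.castSucc Fin.castSucc).det / A.det := by
  rw [inv_def, smul_apply, adjugate_fin_succ_eq_det_submatrix, Ring.inverse_eq_inv',
    smul_eq_mul, Fin.succAbove_last]
  simp [div_eq_inv_mul, ← two_mul, pow_mul]

theorem inv_apply_last_castSucc (A : Matrix (Fin (n + 1)) (Fin (n + 1)) 𝕜) (hA : A.det ≠ 0)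
    (hA₀ : (A.submatrix Fin.castSucc Fin.castSucc).det ≠ 0) :
    (fun m => A⁻¹ (Fin.last n) m.castSucc) =
      -A⁻¹ (Fin.last n) (Fin.last n) •
        ((fun j => A (Fin.last n) j.castSucc) ᵥ* (A.submatrix Fin.castSucc Fin.castSucc)⁻¹) := by
  set A₀ := A.submatrix Fin.castSucc Fin.castSucc
  have hrow : (fun m => A⁻¹ (Fin.last n) m.castSucc) ᵥ* A₀ =
      -A⁻¹ (Fin.last n) (Fin.last n) • fun j => A (Fin.last n) j.castSucc := by
    funext k
    have h := congrFun (congrFun (nonsing_inv_mul A (isUnit_iff_ne_zero.mpr hA)) (Fin.last n))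
      k.castSucc
    rw [mul_apply, Fin.sum_univ_castSucc, one_apply_ne (Fin.castSucc_lt_last k).ne'] at h
    simp only [vecMul, dotProduct, Pi.smul_apply, smul_eq_mul, A₀, submatrix_apply]
    linear_combination h
  rw [← smul_vecMul, ← hrow, vecMul_vecMul, mul_nonsing_inv A₀ (isUnit_iff_ne_zero.mpr hA₀),
    vecMul_one]

theorem inv_mulVec_last (A : Matrix (Fin (n + 1)) (Fin (n + 1)) 𝕜) (hA : A.det ≠ 0)
    (hA₀ : (A.submatrix Fin.castSucc Fin.castSucc).det ≠ 0) (v : Fin (n + 1) → 𝕜) :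
    (A⁻¹ *ᵥ v) (Fin.last n) = (A.submatrix Fin.castSucc Fin.castSucc).det / A.det *
      (v (Fin.last n) - (fun j => A (Fin.last n) j.castSucc) ⬝ᵥ
        ((A.submatrix Fin.castSucc Fin.castSucc)⁻¹ *ᵥ fun j => v j.castSucc)) := by
  have hsplit : (A⁻¹ *ᵥ v) (Fin.last n) =
      (fun m : Fin n => A⁻¹ (Fin.last n) m.castSucc) ⬝ᵥ (fun j : Fin n => v j.castSucc) +
        A⁻¹ (Fin.last n) (Fin.last n) * v (Fin.last n) :=
    Fin.sum_univ_castSucc _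
  rw [hsplit, inv_apply_last_castSucc A hA hA₀, smul_dotProduct, ← dotProduct_mulVec,
    inv_apply_last_last, smul_eq_mul]
  ring

end Matrix

theorem abs_sub_sum_mul_le {ι : Type*} (s : Finset ι) {p M : ℝ} {a l : ι → ℝ}
    (hp : |p| ≤ M) (ha : ∀ j ∈ s, |a j| ≤ M) :
    |p - ∑ j ∈ s, a j * l j| ≤ M * (1 + ∑ j ∈ s, |l j|) := by
  calc |p - ∑ j ∈ s, a j * l j| ≤ |p| + ∑ j ∈ s, |a j| * |l j| := by
        simp only [← abs_mul]
        exact (abs_sub _ _).trans (add_le_add_right (Finset.abs_sum_le_sum_abs _ _) _)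
    _ ≤ M + ∑ j ∈ s, M * |l j| := by
        gcongr with j hj
        exact ha j hj
    _ = M * (1 + ∑ j ∈ s, |l j|) := by rw [← Finset.mul_sum]; ring

theorem IsCompact.le_ciSup_of_continuousOn {α : Type*} [TopologicalSpace α] {K : Set α}
    (hK : IsCompact K) {f : α → ℝ} (hf : ContinuousOn f K) {y : α} (hy : y ∈ K) :
    f y ≤ ⨆ z : K, f z :=
  le_ciSup (Set.image_eq_range f K ▸ hK.bddAbove_image hf) ⟨y, hy⟩

theorem stmt_6_general
    (d n : ℕ)
    (x : Fin (n + 1) → (Fin d → ℝ))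
    (φ : Fin (n + 1) → MvPolynomial (Fin d) ℝ)
    (K : Set (Fin d → ℝ))
    (hK : K = convexHull ℝ (Set.range fun i : Fin n => x i.castSucc))
    (hxK : x (Fin.last n) ∈ K)
    (V : Matrix (Fin n) (Fin n) ℝ)
    (hV : ∀ i j, V i j = eval (x j.castSucc) (φ i.castSucc))
    (hdet : V.det ≠ 0)
    (V' : Matrix (Fin (n + 1)) (Fin (n + 1)) ℝ)
    (hV' : ∀ i j, V' i j = eval (x j) (φ i))
    (hdet' : V'.det ≠ 0)
    (ℓ : Fin n → (Fin d → ℝ) → ℝ)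
    (hℓ : ∀ i y, ℓ i y = ∑ j, V⁻¹ i j * eval y (φ j.castSucc))
    (ℓ' : Fin (n + 1) → (Fin d → ℝ) → ℝ)
    (hℓ' : ∀ i y, ℓ' i y = ∑ j, V'⁻¹ i j * eval y (φ j))
    (Λ : ℝ)
    (hΛ : Λ = ⨆ y : K, ∑ i, |ℓ i (y : Fin d → ℝ)|) :
    (⨆ y : K, |ℓ' (Fin.last n) (y : Fin d → ℝ)|) ≤
      |V.det / V'.det| * (⨆ y : K, |eval (y : Fin d → ℝ) (φ (Fin.last n))|) * (1 + Λ) := by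
  have hKc : IsCompact K := hK ▸ (Set.finite_range _).isCompact_convexHull (𝕜 := ℝ)
  have hxK' (j : Fin n) : x j.castSucc ∈ K := hK ▸ subset_convexHull ℝ _ ⟨j, rfl⟩
  have hVsub : V = V'.submatrix Fin.castSucc Fin.castSucc := by ext; simp [hV, hV']
  have hℓ'_last (y : Fin d → ℝ) : ℓ' (Fin.last n) y = V.det / V'.det *
      (eval y (φ (Fin.last n)) - ∑ j, eval (x j.castSucc) (φ (Fin.last n)) * ℓ j y) := by
    rw [hℓ']
    change V'⁻¹.mulVec (fun j => eval y (φ j)) (Fin.last n) = _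
    rw [Matrix.inv_mulVec_last V' hdet' (hVsub ▸ hdet), ← hVsub]
    simp only [dotProduct, hV', hℓ, Matrix.mulVec]
  set M := ⨆ y : K, |eval (y : Fin d → ℝ) (φ (Fin.last n))|
  have hφM {y} (hy : y ∈ K) : |eval y (φ (Fin.last n))| ≤ M :=
    hKc.le_ciSup_of_continuousOn (continuous_eval _).abs.continuousOn hy
  have hℓ_cont : Continuous fun y => ∑ i, |ℓ i y| := by
    simp only [funext (hℓ _)]
    fun_prop
  have hℓΛ {y} (hy : y ∈ K) : ∑ i, |ℓ i y| ≤ Λ :=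
    hΛ ▸ hKc.le_ciSup_of_continuousOn hℓ_cont.continuousOn hy
  have : Nonempty K := ⟨⟨_, hxK⟩⟩
  refine ciSup_le fun ⟨y, hy⟩ => ?_
  calc |ℓ' (Fin.last n) y|
      ≤ |V.det / V'.det| * (M * (1 + ∑ j, |ℓ j y|)) := by
        rw [hℓ'_last, abs_mul]
        gcongr
        exact abs_sub_sum_mul_le _ (hφM hy) fun j _ => hφM (hxK' j)
    _ ≤ |V.det / V'.det| * M * (1 + Λ) := by
        rw [mul_assoc]
        gcongr
        · exact (abs_nonneg _).trans (hφM hy)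
        · exact hℓΛ hy

/-- Proposition 3.3, second inequality: the new Lagrange basis function satisfies
`‖ℓ'_{n+1}‖_{L∞(K)} ≤ |det V / det V'| * ‖φ_{n+1}‖_{L∞(K)} * (1 + Λ)`. -/
theorem stmt_6
    (d n : ℕ) (hd : 0 < d) (hn : 0 < n)
    (x : Fin (n + 1) → (Fin d → ℝ)) (hx : Function.Injective x)
    (φ : Fin (n + 1) → MvPolynomial (Fin d) ℝ)
    (K : Set (Fin d → ℝ))
    (hK : K = convexHull ℝ (Set.range fun i : Fin n => x i.castSucc))
    (hxK : x (Fin.last n) ∈ K)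
    (V : Matrix (Fin n) (Fin n) ℝ)
    (hV : ∀ i j, V i j = eval (x j.castSucc) (φ i.castSucc))
    (hdet : V.det ≠ 0)
    (V' : Matrix (Fin (n + 1)) (Fin (n + 1)) ℝ)
    (hV' : ∀ i j, V' i j = eval (x j) (φ i))
    (hdet' : V'.det ≠ 0)
    (ℓ : Fin n → (Fin d → ℝ) → ℝ)
    (hℓ : ∀ i y, ℓ i y = ∑ j, V⁻¹ i j * eval y (φ j.castSucc))
    (ℓ' : Fin (n + 1) → (Fin d → ℝ) → ℝ)
    (hℓ' : ∀ i y, ℓ' i y = ∑ j, V'⁻¹ i j * eval y (φ j))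
    (Λ : ℝ)
    (hΛ : Λ = ⨆ y : K, ∑ i, |ℓ i (y : Fin d → ℝ)|) :
    (⨆ y : K, |ℓ' (Fin.last n) (y : Fin d → ℝ)|) ≤
      |V.det / V'.det| * (⨆ y : K, |eval (y : Fin d → ℝ) (φ (Fin.last n))|) * (1 + Λ) :=
  stmt_6_general d n x φ K hK hxK V hV hdet V' hV' hdet' ℓ hℓ ℓ' hℓ' Λ hΛ
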